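/- Let p_i = p_1 * 2^{-(i-1)} be the false positive rate of level i and suppose 2 * p_1 <= P. Then for any number of levels l, the overall false positive probability 1 - prod_{i=1}^{l}(1 - p_i) is at most P. -/
import Mathlib

lemma one_sub_sum_le_prod_one_sub (s : Finset ℕ) (f : ℕ → ℝ)
    (h0 : ∀ i ∈ s, 0 ≤ f i) (h1 : ∀ i ∈ s, f i ≤ 1) :
    1 - ∑ i ∈ s, f i ≤ ∏ i ∈ s, (1 - f i) := by
  induction s using Finset.induction with
  | empty => simp
  | @insert a s hnot ih =>
    rw [Finset.sum_insert hnot, Finset.prod_insert hnot]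
    have ha0 := h0 a (Finset.mem_insert_self a s)
    have ha1 := h1 a (Finset.mem_insert_self a s)
    have ih' := ih (fun i hi => h0 i (Finset.mem_insert_of_mem hi))
      (fun i hi => h1 i (Finset.mem_insert_of_mem hi))
    have hs0 : 0 ≤ ∑ i ∈ s, f i := Finset.sum_nonneg fun i hi => h0 i (Finset.mem_insert_of_mem hi)
    nlinarith
/-- If level `i` has false positive rate `p1 * 2^{-(i-1)} ∈ [0,1]` and `2 * p1 ≤ P`,
then for any number of levels `l` the overall false positive probability
`1 - ∏_{i=1}^l (1 - p i)` is at most `P`. -/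
theorem expandable_fprate_bounded (p1 P : ℝ) (hp1 : 0 ≤ p1) (hp1' : p1 ≤ 1)
    (hP : 2 * p1 ≤ P) (l : ℕ) :
    1 - ∏ i ∈ Finset.Icc 1 l, (1 - p1 * (2 : ℝ) ^ (-((i : ℤ) - 1))) ≤ P := by
  set f : ℕ → ℝ := fun i => p1 * (2 : ℝ) ^ (-((i : ℤ) - 1)) with hf
  have h0 : ∀ i ∈ Finset.Icc 1 l, 0 ≤ f i := fun i _ => by positivity
  have h1 : ∀ i ∈ Finset.Icc 1 l, f i ≤ 1 := by
    intro i hi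
    have h2 : (2 : ℝ) ^ (-((i : ℤ) - 1)) ≤ 1 := by
      apply zpow_le_one_of_nonpos₀ (by norm_num)
      have : 1 ≤ i := (Finset.mem_Icc.mp hi).1
      omega
    calc f i ≤ 1 * 1 := mul_le_mul hp1' h2 (by positivity) (by norm_num)
    _ = 1 := by ring
  have key := one_sub_sum_le_prod_one_sub _ f h0 h1
  have hsum : ∑ i ∈ Finset.Icc 1 l, f i ≤ 2 * p1 := by
    have : ∑ i ∈ Finset.Icc 1 l, f i = ∑ i ∈ Finset.range l, p1 * (1/2 : ℝ) ^ i := by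
      rw [show Finset.Icc 1 l = Finset.Ico 1 (l+1) by rw [Finset.Ico_add_one_right_eq_Icc],
        Finset.sum_Ico_eq_sum_range]
      apply Finset.sum_congr (by simp)
      intro i _
      simp only [hf]
      congr 1
      rw [show (-(((1 + i : ℕ) : ℤ) - 1)) = -(i : ℤ) by push_cast; ring]
      rw [zpow_neg, one_div, inv_pow, zpow_natCast]
    rw [this, ← Finset.mul_sum]
    calc p1 * ∑ i ∈ Finset.range l, (1/2 : ℝ) ^ i ≤ p1 * 2 :=
          mul_le_mul_of_nonneg_left (sum_geometric_two_le l) hp1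
    _ = 2 * p1 := by ring
  linarith
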